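/- arXiv:math/0601352 — 3 statements merged into one kernel-verified Lean document; each statement's English description precedes it below -/
import Mathlib

section
/- For partitions μ and ν, Σ_k k·C_k(μ,ν) = (1/2)(κ(μ) + κ(ν)), where C_k(μ,ν) are the Laurent coefficients of f_{μ,ν}(q). -/
/-- A partition: a weakly decreasing sequence of natural numbers with finitely many
nonzero parts.  `parts i` is the `(i+1)`-st part (so indexing in the paper is shifted by one). -/
structure Ptn where
  parts : ℕ → ℕ
  anti : ∀ ⦃i j : ℕ⦄, i ≤ j → parts j ≤ parts i
  bnd : ℕ
  bnd_spec : ∀ i, bnd ≤ i → parts i = 0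

/-- The empty partition. -/
def zeroP : Ptn := ⟨fun _ => 0, fun _ _ _ => le_rfl, 0, fun _ _ => rfl⟩

/-- `|μ| = Σ_j μ_j`. -/
def psize (μ : Ptn) : ℕ := ∑ i ∈ Finset.range μ.bnd, μ.parts i

/-- `κ(μ) = |μ| + Σ_j μ_j (μ_j - 2 j)` (the sum over the nonzero parts, `j` being the
1-based index of the part). -/
def kappa (μ : Ptn) : ℤ :=
  (psize μ : ℤ) + ∑ i ∈ Finset.range μ.bnd, (μ.parts i : ℤ) * ((μ.parts i : ℤ) - 2 * (i + 1))

/-- The conjugate (transposed) partition: `(μ^t)_i = #{ j : μ_j ≥ i }`. -/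
def pconj (μ : Ptn) : Ptn where
  parts i := ((Finset.range μ.bnd).filter (fun j => i + 1 ≤ μ.parts j)).card
  anti := by
    intro i j hij
    apply Finset.card_le_card
    intro a ha
    simp only [Finset.mem_filter] at ha ⊢
    exact ⟨ha.1, by omega⟩
  bnd := μ.parts 0
  bnd_spec := by
    intro i hi
    rw [Finset.card_eq_zero, Finset.filter_eq_empty_iff]
    intro a _
    have := μ.anti (Nat.zero_le a)
    omega

/-- The cells of the skew Young diagram `λ/μ`, with 0-based coordinates:
`(i, j)` is a cell iff `μ_{i+1} ≤ j < λ_{i+1}`. -/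
def cellsF (lam mu : Ptn) : Finset (ℕ × ℕ) :=
  (Finset.range lam.bnd ×ˢ Finset.range (lam.parts 0)).filter
    (fun c => mu.parts c.1 ≤ c.2 ∧ c.2 < lam.parts c.1)

open scoped LaurentSeries
noncomputable section

/-- `f_μ(q) = (q/(q-1)) Σ_{i ≥ 1} (q^{μ_i - i} - q^{-i})`, as a rational function in `q = X`.
(The summands vanish for `i > bnd`, so the sum is finite.) -/
def fOne (μ : Ptn) : RatFunc ℚ :=
  (RatFunc.X / (RatFunc.X - 1)) *
    ∑ i ∈ Finset.range μ.bnd,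
      ((RatFunc.X : RatFunc ℚ) ^ ((μ.parts i : ℤ) - (i + 1)) - RatFunc.X ^ (-((i : ℤ) + 1)))

/-- `f_{μ,ν}(q) = (q - 2 + q^{-1}) f_μ(q) f_ν(q) + f_μ(q) + f_ν(q)`. -/
def fTwo (μ ν : Ptn) : RatFunc ℚ :=
  (RatFunc.X - 2 + RatFunc.X⁻¹) * fOne μ * fOne ν + fOne μ + fOne ν

/-- `C_k(μ,ν)`: the coefficient of `q^k` in the Laurent polynomial `f_{μ,ν}(q)`
(read off from the Laurent-series expansion of the rational function `f_{μ,ν}`). -/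
def Ck (μ ν : Ptn) (k : ℤ) : ℚ := ((fTwo μ ν : LaurentSeries ℚ)).coeff k

/-!
`Σ_k k C_k` is the derivative at `q = 1` of the Laurent polynomial `f_{μ,ν}`, i.e. the `ε`-part
of its value at `q = 1 + ε` in the dual numbers. There `q - 2 + q⁻¹ = (q - 1)² / q` vanishes since
`ε² = 0`, so only `f_μ + f_ν` contributes. Summing the geometric series row by row,
`f_μ(q) = Σ q^(j - i)` over the cells `(i, j)` of `μ`, whose derivative at `1` is the content sum
`Σ (j - i) = κ(μ) / 2`.
-/

open LaurentPolynomial DualNumber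

section DualNumber

variable (R : Type*) [CommRing R]

def DualNumber.oneAddEps : R[ε]ˣ where
  val := 1 + ε
  inv := 1 - ε
  val_inv := by linear_combination (-1 : R[ε]) * (eps_mul_eps : (ε * ε : R[ε]) = 0)
  inv_val := by linear_combination (-1 : R[ε]) * (eps_mul_eps : (ε * ε : R[ε]) = 0)

variable {R}

theorem DualNumber.val_oneAddEps_zpow (n : ℤ) :
    ((oneAddEps R ^ n : R[ε]ˣ) : R[ε]) = 1 + (n : R[ε]) * ε := by
  induction n using Int.induction_on with
  | zero => simp
  | succ n ih =>
    rw [zpow_add_one, Units.val_mul, ih]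
    change _ * (1 + ε) = _
    push_cast
    linear_combination (n : R[ε]) * (eps_mul_eps : (ε * ε : R[ε]) = 0)
  | pred n ih =>
    rw [zpow_sub_one, Units.val_mul, ih]
    change _ * (1 - ε) = _
    push_cast
    linear_combination (n : R[ε]) * (eps_mul_eps : (ε * ε : R[ε]) = 0)

end DualNumber

namespace LaurentPolynomial

section CommRing

variable {R : Type*} [CommRing R]

def evalOneAddEps : R[T;T⁻¹] →+* R[ε] := eval₂ (algebraMap R R[ε]) (oneAddEps R)

theorem evalOneAddEps_T (n : ℤ) : evalOneAddEps (T n : R[T;T⁻¹]) = 1 + (n : R[ε]) * ε := by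
  rw [evalOneAddEps, eval₂_T, val_oneAddEps_zpow]

theorem snd_evalOneAddEps_T (n : ℤ) : (evalOneAddEps (T n : R[T;T⁻¹])).snd = n := by
  simp [evalOneAddEps_T]

theorem evalOneAddEps_T_one_sub_two_add_T_neg_one :
    evalOneAddEps (T 1 - 2 + T (-1) : R[T;T⁻¹]) = 0 := by
  rw [map_add, map_sub, map_ofNat, evalOneAddEps_T, evalOneAddEps_T]
  push_cast
  ring

theorem finsum_mul_coeff_eq_snd_evalOneAddEps (g : R[T;T⁻¹]) :
    ∑ᶠ k : ℤ, (k : R) * g.coeff k = (evalOneAddEps g).snd := by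
  rw [finsum_eq_sum_of_support_subset _ (s := g.coeff.support)
    (Function.support_subset_iff'.mpr fun k hk => by simp [Finsupp.notMem_support_iff.mp hk])]
  change g.coeff.sum (fun k a => (k : R) * a) = _
  induction g using LaurentPolynomial.induction_on' with
  | add p q hp hq =>
    rw [AddMonoidAlgebra.coeff_add, Finsupp.sum_add_index' (fun _ => mul_zero _)
      (fun _ _ _ => mul_add _ _ _), hp, hq, map_add, TrivSqZeroExt.snd_add]
  | C_mul_T n a =>
    rw [← single_eq_C_mul_T, AddMonoidAlgebra.coeff_single, Finsupp.sum_single_index (mul_zero _),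
      single_eq_C_mul_T, map_mul, evalOneAddEps_T]
    simp [evalOneAddEps, TrivSqZeroExt.algebraMap_eq_inl, mul_comm]

end CommRing

section Field

variable {K : Type*} [Field K]

def toRatFunc : K[T;T⁻¹] →+* RatFunc K :=
  eval₂ (algebraMap K (RatFunc K)) (Units.mk0 RatFunc.X RatFunc.X_ne_zero)

theorem toRatFunc_T (n : ℤ) : toRatFunc (T n : K[T;T⁻¹]) = RatFunc.X ^ n := by
  rw [toRatFunc, eval₂_T, Units.val_zpow_eq_zpow_val, Units.val_mk0]

theorem coeff_toRatFunc (g : K[T;T⁻¹]) (k : ℤ) :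
    ((toRatFunc g : RatFunc K) : K⸨X⸩).coeff k = g.coeff k := by
  induction g using LaurentPolynomial.induction_on' with
  | add p q hp hq => rw [map_add, map_add, HahnSeries.coeff_add, hp, hq]; rfl
  | C_mul_T n a =>
    have coe_C : ((RatFunc.C a : RatFunc K) : K⸨X⸩) = HahnSeries.C a := by
      rw [← RatFunc.algebraMap_C, ← RatFunc.coePolynomial, ← RatFunc.coe_coe, Polynomial.coe_C,
        HahnSeries.ofPowerSeries_C]
    rw [map_mul, toRatFunc_T, toRatFunc, eval₂_C, RatFunc.algebraMap_eq_C, map_mul, coe_C,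
      map_zpow₀, RatFunc.coe_X, ← RatFunc.single_zpow, HahnSeries.C_apply,
      HahnSeries.single_mul_single, zero_add, mul_one, ← single_eq_C_mul_T,
      AddMonoidAlgebra.coeff_single]
    simp [HahnSeries.coeff_single, Finsupp.single_apply, eq_comm]

end Field

end LaurentPolynomial

theorem RatFunc.X_ne_one {K : Type*} [Field K] : (RatFunc.X : RatFunc K) ≠ 1 := by
  simpa [sub_ne_zero] using RatFunc.algebraMap_ne_zero (Polynomial.X_sub_C_ne_zero (1 : K))

theorem div_sub_one_mul_zpow_sub {F : Type*} [Field F] {x : F} (hx : x ≠ 0) (hx1 : x ≠ 1)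
    (m i : ℕ) :
    x / (x - 1) * (x ^ ((m : ℤ) - (i + 1)) - x ^ (-((i : ℤ) + 1)))
      = ∑ t ∈ Finset.range m, x ^ ((t : ℤ) - i) := by
  have hx1' : x - 1 ≠ 0 := sub_ne_zero.mpr hx1
  have geom := geom_sum_mul x m
  simp only [zpow_sub₀ hx, zpow_natCast, ← Finset.sum_div]
  rw [zpow_neg, zpow_add₀ hx, zpow_natCast, zpow_one]
  field_simp
  linear_combination -geom

open Finset

def contentPoly (μ : Ptn) : ℚ[T;T⁻¹] :=
  ∑ i ∈ range μ.bnd, ∑ t ∈ range (μ.parts i), T ((t : ℤ) - i)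

theorem fOne_eq_toRatFunc_contentPoly (μ : Ptn) : fOne μ = toRatFunc (contentPoly μ) := by
  simp only [fOne, contentPoly, mul_sum, map_sum, toRatFunc_T]
  exact sum_congr rfl fun i _ =>
    div_sub_one_mul_zpow_sub RatFunc.X_ne_zero RatFunc.X_ne_one _ _

theorem fTwo_eq_toRatFunc (μ ν : Ptn) :
    fTwo μ ν = toRatFunc ((T 1 - 2 + T (-1)) * contentPoly μ * contentPoly ν
      + contentPoly μ + contentPoly ν) := by
  simp only [fTwo, fOne_eq_toRatFunc_contentPoly, map_add, map_mul, map_sub, map_ofNat, toRatFunc_T,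
    zpow_one, zpow_neg_one]

theorem sum_range_sub_mul_two (m i : ℕ) :
    (∑ t ∈ range m, ((t : ℚ) - i)) * 2 = m + m * (m - 2 * (i + 1)) := by
  induction m with
  | zero => simp
  | succ m ih => rw [sum_range_succ, add_mul, ih]; push_cast; ring

theorem snd_evalOneAddEps_contentPoly (μ : Ptn) :
    (evalOneAddEps (contentPoly μ)).snd = (kappa μ : ℚ) / 2 := by
  simp only [contentPoly, map_sum, TrivSqZeroExt.snd_sum, snd_evalOneAddEps_T, kappa, psize]
  push_cast
  rw [← sum_add_distrib, eq_div_iff two_ne_zero, sum_mul]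
  exact sum_congr rfl fun i _ => sum_range_sub_mul_two _ _

/-- `Σ_k k·C_k(μ,ν) = (1/2)(κ(μ) + κ(ν))`. -/
theorem sum_mul_Ck (μ ν : Ptn) :
    ∑ᶠ k : ℤ, (k : ℚ) * Ck μ ν k = ((kappa μ : ℚ) + (kappa ν : ℚ)) / 2 := by
  simp only [Ck, fTwo_eq_toRatFunc, coeff_toRatFunc]
  rw [finsum_mul_coeff_eq_snd_evalOneAddEps, map_add, map_add, map_mul, map_mul,
    evalOneAddEps_T_one_sub_two_add_T_neg_one, zero_mul, zero_mul, zero_add,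
    TrivSqZeroExt.snd_add, snd_evalOneAddEps_contentPoly, snd_evalOneAddEps_contentPoly, add_div]
end
end

section
/- For partitions λ, μ, ν, the skew Schur function evaluated at the principal specialization shifted by ν satisfies s_{λ/μ}(q^{ν+ρ}) = (−1)^{|λ|−|μ|} s_{λ^t/μ^t}(q^{−ν^t−ρ}), where q^{ν+ρ} denotes the substitution x_i = q^{ν_i − i + 1/2}. -/
noncomputable section

variable {F : Type} [Field F]

/-- Complete homogeneous symmetric functions of a finite alphabet, given as a list. -/
def hList : List F → ℕ → F
  | [], 0 => 1
  | [], _ + 1 => 0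
  | a :: as, n => ∑ m ∈ Finset.range (n + 1), a ^ m * hList as (n - m)

/-- Complete homogeneous symmetric functions of the geometric alphabet
`{A, A r, A r², …}`:  `h_n = A^n / ((1-r)(1-r²)⋯(1-rⁿ))`. -/
def hGeom (A r : F) (n : ℕ) : F := A ^ n / ∏ k ∈ Finset.range n, (1 - r ^ (k + 1))

/-- Complete homogeneous symmetric functions of the principally specialized alphabet
`c·q^{ν+ρ}`, i.e. the letters `x_i = c · t^{2ν_i - 2i + 1}` (`i ≥ 1`, `t = q^{1/2}`),
whose tail (for `i` beyond the length of `ν`) is geometric with ratio `t⁻²`. -/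
def hPos (t c : F) (ν : Ptn) (n : ℕ) : F :=
  ∑ m ∈ Finset.range (n + 1),
    hList (List.ofFn fun i : Fin ν.bnd => c * t ^ (2 * (ν.parts i : ℤ) - 2 * (i : ℤ) - 1)) m *
      hGeom (c * t ^ (-(2 * (ν.bnd : ℤ)) - 1)) (t ^ (-2 : ℤ)) (n - m)

/-- Complete homogeneous symmetric functions of the alphabet `c·q^{-ν-ρ}`, i.e. the letters
`x_i = c · t^{-2ν_i + 2i - 1}` (`i ≥ 1`, `t = q^{1/2}`), with geometric tail of ratio `t²`. -/
def hNeg (t c : F) (ν : Ptn) (n : ℕ) : F :=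
  ∑ m ∈ Finset.range (n + 1),
    hList (List.ofFn fun i : Fin ν.bnd => c * t ^ (-(2 * (ν.parts i : ℤ)) + 2 * (i : ℤ) + 1)) m *
      hGeom (c * t ^ (2 * (ν.bnd : ℤ) + 1)) (t ^ (2 : ℤ)) (n - m)

/-- `h` extended to integer indices by `0` in negative degrees. -/
def hZ (h : ℕ → F) (m : ℤ) : F := if 0 ≤ m then h m.toNat else 0

/-- The skew Schur function `s_{λ/μ}` of the alphabet with complete homogeneous symmetric
functions `h`, via the Jacobi–Trudi determinant `det(h_{λ_i - μ_j - i + j})`. -/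
def sJT (h : ℕ → F) (lam mu : Ptn) : F :=
  Matrix.det (Matrix.of fun i j : Fin (lam.bnd + mu.bnd) =>
    hZ h ((lam.parts i : ℤ) - (mu.parts j : ℤ) - (i : ℤ) + (j : ℤ)))

/-- `s_{λ/μ}(q^{ν+ρ})`: the skew Schur function with the principal specialization
`x_i = q^{ν_i - i + 1/2} = t^{2ν_i - 2i + 1}` (`t = q^{1/2}`). -/
def sP (t : F) (lam mu ν : Ptn) : F := sJT (hPos t 1 ν) lam mu

/-- `s_{λ/μ}(q^{-ν-ρ})`: the specialization `x_i = q^{-ν_i + i - 1/2} = t^{-2ν_i + 2i - 1}`. -/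
def sN (t : F) (lam mu ν : Ptn) : F := sJT (hNeg t 1 ν) lam mu

/-- `s_μ(q^ρ)`: the principal specialization `x_i = q^{-i + 1/2}`. -/
def sRho (t : F) (mu : Ptn) : F := sP t mu zeroP zeroP

/-- The skew Schur function `s_{λ/μ}(x, y)` of the concatenation of two alphabets with
complete homogeneous symmetric functions `h₁` and `h₂`, via the branching rule
`s_{λ/μ}(x,y) = Σ_ξ s_{λ/ξ}(x) s_{ξ/μ}(y)` (a finite sum). -/
def dblS (h1 h2 : ℕ → F) (lam mu : Ptn) : F := ∑ᶠ ξ : Ptn, sJT h1 lam ξ * sJT h2 ξ mu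

/-!
Write `h = hPos t 1 ν` and `g = hNeg t 1 νᵗ`. Their generating series are inverse to each other:
after telescoping the geometric tails, `(∑ hₙ zⁿ)(∑ gₙ zⁿ)` is a quotient of two products of
factors `1 - t^(2u+1) z`, over `u ∈ {νᵢ - i - 1} ∪ {j - νᵗⱼ}` and over `u ∈ [-N, M)`, which agree
because these two families of integers are complementary in `[-N, M)` (the Maya diagram of `ν`);
what is left is the product of the two geometric series, which is fixed by `z ↦ t² z` and hence 1.

For inverse series with `h₀ = 1` the Jacobi–Trudi determinants satisfy
`s_{λ/μ}(h) = (-1)^(|λ|-|μ|) s_{λᵗ/μᵗ}(g)`: reorder the rows and columns of the unitriangular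
Toeplitz matrix `(h_{a-b})` by the Maya bijections of `λ` and `μ`. Its upper left block is the
Jacobi–Trudi matrix of `λ/μ`, the lower right block of its inverse `(g_{a-b})` is the transposed
Jacobi–Trudi matrix of `λᵗ/μᵗ`, and Jacobi's complementary minor identity relates the two up to
the sign of the reordering, which is `(-1)^(|λ|+|μ|)`.
-/

open Finset hiding mk
open PowerSeries

theorem Equiv.Perm.sign_finSumFinEquiv_symm_trans {N M : ℕ} (e : Fin N ⊕ Fin M ≃ Fin (N + M)) :
    Equiv.Perm.sign (finSumFinEquiv.symm.trans e) =
      (∏ i : Fin N, ∏ i' : Fin N,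
        if i < i' then (if e (.inl i) < e (.inl i') then 1 else -1) else 1) *
      (∏ i : Fin N, ∏ j : Fin M, if e (.inl i) < e (.inr j) then 1 else -1) *
      (∏ j : Fin M, ∏ j' : Fin M,
        if j < j' then (if e (.inr j) < e (.inr j') then 1 else -1) else 1) := by
  have hlt (i : Fin N) (j : Fin M) : Fin.castAdd M i < Fin.natAdd N j :=
    Fin.lt_def.mpr (by simp only [Fin.val_castAdd, Fin.val_natAdd]; omega)
  rw [Equiv.Perm.sign_eq_prod_prod_Ioi]
  simp_rw [← filter_lt_eq_Ioi, prod_filter]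
  simp only [Fin.prod_univ_add, prod_mul_distrib, (Fin.strictMono_castAdd M).lt_iff_lt,
    (Fin.strictMono_natAdd N).lt_iff_lt, hlt, (hlt _ _).not_gt, finSumFinEquiv_symm_apply_castAdd,
    finSumFinEquiv_symm_apply_natAdd, Equiv.trans_apply, if_true, if_false, prod_const_one, mul_one]
  rw [mul_assoc]

/-- Jacobi's complementary minor identity. -/
theorem Matrix.det_toBlocks₁₁_of_mul_eq_one {R α β : Type*} [CommRing R] [Fintype α] [Fintype β]
    [DecidableEq α] [DecidableEq β] {A B : Matrix (α ⊕ β) (α ⊕ β) R} (hAB : A * B = 1) :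
    A.toBlocks₁₁.det = A.det * B.toBlocks₂₂.det := by
  have hblocks := hAB
  rw [← Matrix.fromBlocks_toBlocks A, ← Matrix.fromBlocks_toBlocks B, Matrix.fromBlocks_multiply,
    ← Matrix.fromBlocks_one, Matrix.fromBlocks_inj] at hblocks
  obtain ⟨-, h₁₂, -, h₂₂⟩ := hblocks
  have hkey : A * Matrix.fromBlocks 1 B.toBlocks₁₂ 0 B.toBlocks₂₂ =
      Matrix.fromBlocks A.toBlocks₁₁ 0 A.toBlocks₂₁ 1 := by
    conv_lhs => rw [← Matrix.fromBlocks_toBlocks A]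
    rw [Matrix.fromBlocks_multiply]
    simp [h₁₂, h₂₂]
  simpa [Matrix.det_fromBlocks_zero₂₁, Matrix.det_fromBlocks_zero₁₂] using
    (congrArg Matrix.det hkey).symm

theorem PowerSeries.coeff_mk_mul_mk {R : Type*} [CommSemiring R] (a b : ℕ → R) (n : ℕ) :
    coeff n (mk a * mk b) = ∑ m ∈ range (n + 1), a m * b (n - m) := by
  rw [coeff_mul, Nat.sum_antidiagonal_eq_sum_range_succ_mk]
  simp

theorem PowerSeries.mk_pow_mul_one_sub_C_mul_X {R : Type*} [CommRing R] (a : R) :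
    mk (a ^ ·) * (1 - C a * X) = 1 := by
  simpa [rescale_mk, rescale_X] using congrArg (rescale a) (mk_one_mul_one_sub_eq_one (S := R))

theorem PowerSeries.one_sub_C_mul_X_ne_zero {R : Type*} [CommRing R] [Nontrivial R] (a : R) :
    (1 - C a * X : R⟦X⟧) ≠ 0 := fun h => by simpa using congrArg constantCoeff h

theorem PowerSeries.eq_one_of_rescale_eq_self {K : Type*} [Field K] {u : K} (hu : ¬IsOfFinOrder u)
    {P : K⟦X⟧} (h : rescale u P = P) (h0 : constantCoeff P = 1) : P = 1 := by
  ext n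
  rcases n with _ | n
  · simpa using h0
  · have hc := congrArg (coeff (n + 1)) h
    rw [coeff_rescale] at hc
    have hun : u ^ (n + 1) ≠ 1 := fun h1 =>
      hu (isOfFinOrder_iff_pow_eq_one.mpr ⟨n + 1, n.succ_pos, h1⟩)
    have : (u ^ (n + 1) - 1) * coeff (n + 1) P = 0 := by linear_combination hc
    simpa [coeff_one, sub_ne_zero.mpr hun] using this

theorem not_isOfFinOrder_inv {G₀ : Type*} [GroupWithZero G₀] {a : G₀} (ha : ¬IsOfFinOrder a) :
    ¬IsOfFinOrder a⁻¹ := by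
  simp_rw [isOfFinOrder_iff_pow_eq_one, inv_pow, inv_eq_one] at ha ⊢
  exact ha

theorem RatFunc.not_isOfFinOrder_X {K : Type*} [Field K] :
    ¬IsOfFinOrder (RatFunc.X : RatFunc K) := by
  rw [isOfFinOrder_iff_pow_eq_one]
  rintro ⟨n, hn, h⟩
  have hX : (Polynomial.X : Polynomial K) ^ n = 1 := by
    apply RatFunc.algebraMap_injective K
    rw [map_pow, map_one, RatFunc.algebraMap_X, h]
  have := congrArg Polynomial.natDegree hX
  rw [Polynomial.natDegree_X_pow, Polynomial.natDegree_one] at this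
  omega

namespace SkewSchur

theorem pconj_parts_le_bnd (μ : Ptn) (j : ℕ) : (pconj μ).parts j ≤ μ.bnd := by
  simpa [pconj] using card_filter_le (range μ.bnd) (fun a => j + 1 ≤ μ.parts a)

theorem pconj_parts_le_iff (μ : Ptn) {i j : ℕ} : (pconj μ).parts j ≤ i ↔ μ.parts i ≤ j := by
  constructor
  · intro h
    by_contra! hij
    have hi : i < μ.bnd := by
      by_contra! hi
      simp [μ.bnd_spec i hi] at hij
    have hsub : range (i + 1) ⊆ (range μ.bnd).filter fun a => j + 1 ≤ μ.parts a := by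
      intro a ha
      simp only [mem_range] at ha
      simp only [mem_filter, mem_range]
      exact ⟨by omega, hij.trans_le (μ.anti (by omega))⟩
    have hcard : i + 1 ≤ (pconj μ).parts j := (card_range _).symm.trans_le (card_le_card hsub)
    omega
  · intro h
    have hsub : ((range μ.bnd).filter fun a => j + 1 ≤ μ.parts a) ⊆ range i := by
      intro a ha
      simp only [mem_filter, mem_range] at ha
      simp only [mem_range]
      by_contra! hia
      have := μ.anti hia
      omega
    exact (card_le_card hsub).trans_eq (card_range i)

section Maya

variable (μ : Ptn) {N M : ℕ}

/-- For `μ.bnd ≤ N` and `μ.parts 0 ≤ M`, the values on `inl` and on `inr` are complementary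
in `[-N, M)` (the Maya diagram of `μ`). -/
def mayaIndex (N M : ℕ) : Fin N ⊕ Fin M → ℤ :=
  Sum.elim (fun i => μ.parts i - i - 1) (fun j => j - (pconj μ).parts j)

theorem mayaIndex_inl_lt_inr_iff (i : Fin N) (j : Fin M) :
    mayaIndex μ N M (.inl i) < mayaIndex μ N M (.inr j) ↔ μ.parts i ≤ j := by
  have := pconj_parts_le_iff μ (i := i) (j := j)
  simp only [mayaIndex, Sum.elim_inl, Sum.elim_inr]
  omega

variable {μ}

theorem mayaIndex_mem_Ico (hN : μ.bnd ≤ N) (hM : μ.parts 0 ≤ M) (x : Fin N ⊕ Fin M) :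
    -(N : ℤ) ≤ mayaIndex μ N M x ∧ mayaIndex μ N M x < M := by
  rcases x with i | j
  · have := μ.anti (Nat.zero_le i)
    have := i.isLt
    simp only [mayaIndex, Sum.elim_inl]
    omega
  · have := pconj_parts_le_bnd μ j
    have := j.isLt
    simp only [mayaIndex, Sum.elim_inr]
    omega

theorem mayaIndex_inl_lt_inl_iff (i i' : Fin N) :
    mayaIndex μ N M (.inl i) < mayaIndex μ N M (.inl i') ↔ i' < i := by
  have := @μ.anti i i'
  have := @μ.anti i' i
  simp only [mayaIndex, Sum.elim_inl, Fin.lt_def]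
  omega

theorem mayaIndex_inr_lt_inr_iff (j j' : Fin M) :
    mayaIndex μ N M (.inr j) < mayaIndex μ N M (.inr j') ↔ j < j' := by
  have := @(pconj μ).anti j j'
  have := @(pconj μ).anti j' j
  simp only [mayaIndex, Sum.elim_inr, Fin.lt_def]
  omega

theorem mayaIndex_inl_ne_inr (i : Fin N) (j : Fin M) :
    mayaIndex μ N M (.inl i) ≠ mayaIndex μ N M (.inr j) := by
  have := pconj_parts_le_iff μ (i := i) (j := j)
  simp only [mayaIndex, Sum.elim_inl, Sum.elim_inr]
  omega

variable (μ) in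
theorem mayaIndex_injective (N M : ℕ) : Function.Injective (mayaIndex μ N M) := by
  rintro (i | j) (i' | j') h
  · exact congrArg _ (le_antisymm (not_lt.mp ((mayaIndex_inl_lt_inl_iff i i').not.mp h.not_lt))
      (not_lt.mp ((mayaIndex_inl_lt_inl_iff i' i).not.mp h.symm.not_lt)))
  · exact absurd h (mayaIndex_inl_ne_inr i j')
  · exact absurd h.symm (mayaIndex_inl_ne_inr i' j)
  · exact congrArg _ (le_antisymm (not_lt.mp ((mayaIndex_inr_lt_inr_iff j' j).not.mp h.symm.not_lt))
      (not_lt.mp ((mayaIndex_inr_lt_inr_iff j j').not.mp h.not_lt)))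

def mayaEquiv (hN : μ.bnd ≤ N) (hM : μ.parts 0 ≤ M) : Fin N ⊕ Fin M ≃ Fin (N + M) :=
  Equiv.ofBijective
    (fun x => ⟨(mayaIndex μ N M x + N).toNat, by have := mayaIndex_mem_Ico hN hM x; omega⟩)
    ((Fintype.bijective_iff_injective_and_card _).mpr
      ⟨fun x y hxy => mayaIndex_injective μ N M (by
        have := mayaIndex_mem_Ico hN hM x
        have := mayaIndex_mem_Ico hN hM y
        have := congrArg Fin.val hxy
        simp only at this
        omega), by simp⟩)

theorem mayaEquiv_val (hN : μ.bnd ≤ N) (hM : μ.parts 0 ≤ M) (x : Fin N ⊕ Fin M) :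
    ((mayaEquiv hN hM x : ℕ) : ℤ) = mayaIndex μ N M x + N := by
  have := mayaIndex_mem_Ico hN hM x
  simp only [mayaEquiv, Equiv.ofBijective_apply]
  omega

theorem mayaEquiv_lt_iff (hN : μ.bnd ≤ N) (hM : μ.parts 0 ≤ M) (x y : Fin N ⊕ Fin M) :
    mayaEquiv hN hM x < mayaEquiv hN hM y ↔ mayaIndex μ N M x < mayaIndex μ N M y := by
  rw [Fin.lt_def, ← Int.ofNat_lt, mayaEquiv_val, mayaEquiv_val, add_lt_add_iff_right]

theorem prod_mayaIndex {R : Type*} [CommMonoid R] (hN : μ.bnd ≤ N) (hM : μ.parts 0 ≤ M)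
    (f : ℤ → R) :
    (∏ i : Fin N, f (μ.parts i - i - 1)) * ∏ j : Fin M, f (j - (pconj μ).parts j) =
      ∏ v : Fin (N + M), f (v - N) := by
  rw [← Equiv.prod_comp (mayaEquiv hN hM), Fintype.prod_sum_type]
  simp only [mayaEquiv_val, add_sub_cancel_right, mayaIndex, Sum.elim_inl, Sum.elim_inr]

theorem prod_ite_le_one_neg_one (a M : ℕ) (ha : a ≤ M) :
    ∏ j : Fin M, (if a ≤ (j : ℕ) then 1 else -1 : ℤˣ) = (-1) ^ a := by
  rw [Fin.prod_univ_eq_prod_range (fun j => if a ≤ j then (1 : ℤˣ) else -1),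
    ← Nat.add_sub_cancel' ha, prod_range_add]
  simp [prod_ite_of_false]

theorem psize_eq_sum_fin (hN : μ.bnd ≤ N) : psize μ = ∑ i : Fin N, μ.parts i := by
  rw [Fin.sum_univ_eq_sum_range (fun i => μ.parts i), psize]
  exact sum_subset (range_subset_range.mpr hN) fun i _ hi => μ.bnd_spec i (by simpa using hi)

theorem prod_prod_ite_parts_le_one_neg_one (hN : μ.bnd ≤ N) (hM : μ.parts 0 ≤ M) :
    ∏ i : Fin N, ∏ j : Fin M, (if μ.parts i ≤ (j : ℕ) then 1 else -1 : ℤˣ) = (-1) ^ psize μ := by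
  rw [psize_eq_sum_fin hN, ← prod_pow_eq_pow_sum]
  exact prod_congr rfl fun i _ => prod_ite_le_one_neg_one _ _ ((μ.anti (Nat.zero_le i)).trans hM)

theorem sign_mayaEquiv_mul_sign_mayaEquiv {lam : Ptn} (hN : μ.bnd ≤ N) (hM : μ.parts 0 ≤ M)
    (hN' : lam.bnd ≤ N) (hM' : lam.parts 0 ≤ M) :
    Equiv.Perm.sign (finSumFinEquiv.symm.trans (mayaEquiv hN' hM')) *
      Equiv.Perm.sign (finSumFinEquiv.symm.trans (mayaEquiv hN hM)) =
      (-1) ^ (psize lam + psize μ) := by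
  simp only [Equiv.Perm.sign_finSumFinEquiv_symm_trans, mayaEquiv_lt_iff, mayaIndex_inl_lt_inl_iff,
    mayaIndex_inr_lt_inr_iff, mayaIndex_inl_lt_inr_iff, prod_prod_ite_parts_le_one_neg_one hN hM,
    prod_prod_ite_parts_le_one_neg_one hN' hM', pow_add]
  -- the inversions within each of the two blocks are the same for every partition
  generalize (∏ i : Fin N, ∏ i' : Fin N, _ : ℤˣ) = a
  generalize (∏ j : Fin M, ∏ j' : Fin M, _ : ℤˣ) = b
  calc _ = (a * a) * (b * b) * ((-1) ^ psize lam * (-1) ^ psize μ) := by ac_rfl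
    _ = _ := by rw [Int.units_mul_self, Int.units_mul_self, one_mul, one_mul]

theorem sign_mayaEquiv_trans_symm {lam : Ptn} (hN : μ.bnd ≤ N) (hM : μ.parts 0 ≤ M)
    (hN' : lam.bnd ≤ N) (hM' : lam.parts 0 ≤ M) :
    Equiv.Perm.sign ((mayaEquiv hN' hM').trans (mayaEquiv hN hM).symm) =
      ((psize lam : ℤ) - psize μ).negOnePow := by
  have hconj : (mayaEquiv hN' hM').trans (mayaEquiv hN hM).symm =
      (finSumFinEquiv.symm.symm.trans ((finSumFinEquiv.symm.trans (mayaEquiv hN' hM')).trans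
        (finSumFinEquiv.symm.trans (mayaEquiv hN hM)).symm)).trans finSumFinEquiv.symm := by
    ext x
    simp
  rw [hconj, Equiv.Perm.sign_symm_trans_trans, Equiv.Perm.sign_trans, Equiv.Perm.sign_symm,
    mul_comm, sign_mayaEquiv_mul_sign_mayaEquiv, Int.negOnePow_sub, Int.negOnePow_def,
    Int.negOnePow_def, zpow_natCast, zpow_natCast, pow_add]

end Maya

theorem hZ_natCast (h : ℕ → F) (n : ℕ) : hZ h n = h n := by
  simp [hZ]

theorem hZ_of_neg (h : ℕ → F) {m : ℤ} (hm : m < 0) : hZ h m = 0 := by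
  simp [hZ, not_le.mpr hm]

def toeplitz (h : ℕ → F) (n : ℕ) : Matrix (Fin n) (Fin n) F :=
  Matrix.of fun i j => hZ h (i - j)

theorem det_toeplitz {h : ℕ → F} (h0 : h 0 = 1) (n : ℕ) : (toeplitz h n).det = 1 := by
  have htri : (toeplitz h n).IsLowerTriangular := fun i j (hij : i < j) =>
    hZ_of_neg h (by rw [Fin.lt_def] at hij; omega)
  rw [Matrix.det_of_isLowerTriangular _ htri]
  exact prod_eq_one fun i _ => by simpa [toeplitz] using hZ_natCast h 0 ▸ h0

theorem toeplitz_mul_toeplitz {h g : ℕ → F} (hg : mk h * mk g = 1) (n : ℕ) :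
    toeplitz h n * toeplitz g n = 1 := by
  ext i j
  simp only [toeplitz, Matrix.mul_apply, Matrix.of_apply]
  rcases le_or_gt (j : ℕ) i with hji | hij
  · obtain ⟨d, hd⟩ := Nat.exists_eq_add_of_le hji
    calc ∑ k : Fin n, hZ h (i - k) * hZ g (k - j)
        = ∑ k ∈ range n, hZ h (i - k) * hZ g (k - j) :=
          Fin.sum_univ_eq_sum_range (fun k => hZ h (i - k) * hZ g (k - j)) n
      _ = ∑ k ∈ Ico (j : ℕ) (i + 1), hZ h (i - k) * hZ g (k - j) := by
          refine (sum_subset (fun k hk => ?_) fun k _ hk => ?_).symm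
          · simp only [mem_Ico, mem_range] at hk ⊢
            omega
          · simp only [mem_Ico, not_and_or, not_le, not_lt] at hk
            rcases hk with hk | hk
            · rw [hZ_of_neg g (by omega), mul_zero]
            · rw [hZ_of_neg h (by omega), zero_mul]
      _ = ∑ m ∈ range (d + 1), g m * h (d - m) := by
          rw [sum_Ico_eq_sum_range, show (i : ℕ) + 1 - j = d + 1 by omega]
          refine sum_congr rfl fun m hm => ?_
          rw [mem_range] at hm
          rw [mul_comm, show ((j + m : ℕ) : ℤ) - j = (m : ℕ) by push_cast; ring,
            show (i : ℤ) - (j + m : ℕ) = (d - m : ℕ) by push_cast; omega, hZ_natCast, hZ_natCast]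
      _ = (1 : Matrix (Fin n) (Fin n) F) i j := by
          rw [← coeff_mk_mul_mk, mul_comm, hg, coeff_one, Matrix.one_apply]
          exact if_congr ⟨fun h0 => Fin.ext (by omega), fun h0 => by rw [h0] at hd; omega⟩ rfl rfl
  · rw [Matrix.one_apply_ne (Fin.ne_of_lt (Fin.lt_def.mpr hij))]
    refine sum_eq_zero fun k _ => ?_
    rcases le_or_gt (k : ℕ) i with hki | hik
    · rw [hZ_of_neg g (by omega), mul_zero]
    · rw [hZ_of_neg h (by omega), zero_mul]

theorem sJT_eq_neg_one_zpow_mul_sJT_pconj {h g : ℕ → F} (h0 : h 0 = 1) (hg : mk h * mk g = 1)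
    (lam mu : Ptn) :
    sJT h lam mu = (-1) ^ ((psize lam : ℤ) - psize mu) * sJT g (pconj lam) (pconj mu) := by
  set N := lam.bnd + mu.bnd
  set M := lam.parts 0 + mu.parts 0
  set eLam := mayaEquiv (μ := lam) (N := N) (M := M) (by omega) (by omega)
  set eMu := mayaEquiv (μ := mu) (N := N) (M := M) (by omega) (by omega)
  set A := (toeplitz h (N + M)).submatrix eLam eMu
  set B := (toeplitz g (N + M)).submatrix eMu eLam
  have hAB : A * B = 1 := by
    rw [Matrix.submatrix_mul_equiv, toeplitz_mul_toeplitz hg, Matrix.submatrix_one_equiv]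
  have h₁₁ : sJT h lam mu = A.toBlocks₁₁.det := by
    rw [sJT]
    congr 1
    ext i j
    simp only [A, toeplitz, Matrix.toBlocks₁₁, Matrix.of_apply, Matrix.submatrix_apply,
      eLam, eMu, mayaEquiv_val, mayaIndex, Sum.elim_inl]
    congr 1
    ring
  have h₂₂ : sJT g (pconj lam) (pconj mu) = B.toBlocks₂₂.det := by
    rw [sJT, ← Matrix.det_transpose]
    congr 1
    ext i j
    simp only [B, toeplitz, Matrix.toBlocks₂₂, Matrix.transpose_apply, Matrix.of_apply,
      Matrix.submatrix_apply, eLam, eMu, mayaEquiv_val, mayaIndex, Sum.elim_inr]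
    congr 1
    ring
  have hA : A.det = (-1) ^ ((psize lam : ℤ) - psize mu) := by
    have hperm :
        A = ((toeplitz h (N + M)).submatrix eMu eMu).submatrix (eLam.trans eMu.symm) id := by
      ext x y
      simp [A]
    rw [hperm, Matrix.det_permute, Matrix.det_submatrix_equiv_self, det_toeplitz h0, mul_one,
      sign_mayaEquiv_trans_symm, Int.cast_negOnePow]
  rw [h₁₁, h₂₂, Matrix.det_toBlocks₁₁_of_mul_eq_one hAB, hA]

theorem mk_hList_mul_prod (L : List F) : mk (hList L) * (L.map fun a => 1 - C a * X).prod = 1 := by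
  induction L with
  | nil =>
    ext n
    cases n <;> simp [hList, coeff_one]
  | cons a L ih =>
    have hcons : mk (hList (a :: L)) = mk (a ^ ·) * mk (hList L) := by
      ext n
      rw [coeff_mk_mul_mk]
      simp [hList]
    rw [hcons, List.map_cons, List.prod_cons]
    calc _ = (mk (a ^ ·) * (1 - C a * X)) * (mk (hList L) * (L.map fun a => 1 - C a * X).prod) := by
          ring
      _ = 1 := by rw [mk_pow_mul_one_sub_C_mul_X, ih, one_mul]

theorem hList_zero (L : List F) : hList L 0 = 1 := by
  induction L with
  | nil => rfl
  | cons a L ih => simp [hList, ih]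

theorem hPos_zero (t c : F) (ν : Ptn) : hPos t c ν 0 = 1 := by
  simp [hPos, hList_zero, hGeom]

theorem rescale_mk_hGeom (u A r : F) : rescale u (mk (hGeom A r)) = mk (hGeom (A * u) r) := by
  rw [rescale_mk]
  ext n
  simp only [coeff_mk, hGeom, mul_pow]
  ring

theorem one_sub_C_mul_X_mul_mk_hGeom {r : F} (hr : ¬IsOfFinOrder r) (A : F) :
    (1 - C A * X) * mk (hGeom A r) = mk (hGeom (A * r) r) := by
  have hfac (k : ℕ) : 1 - r ^ (k + 1) ≠ 0 := fun h =>
    hr (isOfFinOrder_iff_pow_eq_one.mpr ⟨k + 1, k.succ_pos, (sub_eq_zero.mp h).symm⟩)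
  have hprod (n : ℕ) : ∏ k ∈ range n, (1 - r ^ (k + 1)) ≠ 0 :=
    prod_ne_zero_iff.mpr fun k _ => hfac k
  ext n
  rcases n with _ | n
  · simp [hGeom]
  · rw [sub_mul, one_mul, mul_assoc, map_sub, coeff_C_mul, coeff_succ_X_mul]
    simp only [coeff_mk, hGeom, prod_range_succ]
    field_simp [hprod n, hfac n]
    ring

theorem mk_hGeom_mul_pow {r : F} (hr : ¬IsOfFinOrder r) (A : F) (N : ℕ) :
    mk (hGeom (A * r ^ N) r) = (∏ k ∈ range N, (1 - C (A * r ^ k) * X)) * mk (hGeom A r) := by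
  induction N with
  | zero => simp
  | succ N ih =>
    rw [pow_succ, ← mul_assoc, ← one_sub_C_mul_X_mul_mk_hGeom hr, ih, prod_range_succ]
    ring

theorem mk_hGeom_mul_inv_mul_mk_hGeom {r : F} (hr0 : r ≠ 0) (hr : ¬IsOfFinOrder r) (A : F) :
    mk (hGeom (A * r⁻¹) r⁻¹) * mk (hGeom A r) = 1 := by
  have hr' := not_isOfFinOrder_inv hr
  -- the product and its rescaling by `r` both become `(1 - A z) · hGeom A r⁻¹ · hGeom A r`
  refine eq_one_of_rescale_eq_self hr ?_ (by simp [hGeom])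
  rw [map_mul, rescale_mk_hGeom, rescale_mk_hGeom, inv_mul_cancel_right₀ hr0,
    ← one_sub_C_mul_X_mul_mk_hGeom hr', ← one_sub_C_mul_X_mul_mk_hGeom hr]
  ring

theorem mk_hList_ofFn_mul_prod {n : ℕ} (x : Fin n → F) :
    mk (hList (List.ofFn x)) * ∏ i, (1 - C (x i) * X) = 1 := by
  simpa [List.map_ofFn, List.prod_ofFn] using mk_hList_mul_prod (List.ofFn x)

theorem not_isOfFinOrder_zpow_two {t : F} (ht : ¬IsOfFinOrder t) : ¬IsOfFinOrder (t ^ (2 : ℤ)) := by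
  rw [zpow_ofNat, isOfFinOrder_pow]
  simpa using ht

section Specialization

variable {t : F} (ht0 : t ≠ 0) (ht : ¬IsOfFinOrder t)
include ht0 ht

theorem mk_hPos_one_mul_prod (ν : Ptn) :
    mk (hPos t 1 ν) * ∏ i : Fin ν.bnd, (1 - C (t ^ (2 * ((ν.parts i : ℤ) - i - 1) + 1)) * X) =
      (∏ i : Fin ν.bnd, (1 - C (t ^ (2 * (-(i : ℤ) - 1) + 1)) * X)) *
        mk (hGeom (t ^ (-1 : ℤ)) (t ^ (-2 : ℤ))) := by
  have hr : ¬IsOfFinOrder (t ^ (-2 : ℤ)) := by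
    rw [zpow_neg]
    exact not_isOfFinOrder_inv (not_isOfFinOrder_zpow_two ht)
  have hpow (k : ℕ) : t ^ (-1 : ℤ) * (t ^ (-2 : ℤ)) ^ k = t ^ (2 * (-(k : ℤ) - 1) + 1) := by
    rw [← zpow_natCast, ← zpow_mul, ← zpow_add₀ ht0]
    ring_nf
  have hsplit : mk (hPos t 1 ν) =
      mk (hList (List.ofFn fun i : Fin ν.bnd => t ^ (2 * ((ν.parts i : ℤ) - i - 1) + 1))) *
        mk (hGeom (t ^ (-1 : ℤ) * (t ^ (-2 : ℤ)) ^ ν.bnd) (t ^ (-2 : ℤ))) := by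
    ext n
    have hexp (a b : ℤ) : 2 * a - 2 * b - 1 = 2 * (a - b - 1) + 1 := by ring
    have hexp' (a : ℤ) : -(2 * a) - 1 = 2 * (-a - 1) + 1 := by ring
    rw [coeff_mk_mul_mk, hpow]
    simp only [hPos, coeff_mk, hexp, hexp', one_mul]
  have hlist := mk_hList_ofFn_mul_prod fun i : Fin ν.bnd => t ^ (2 * ((ν.parts i : ℤ) - i - 1) + 1)
  rw [hsplit, mk_hGeom_mul_pow hr, ← Fin.prod_univ_eq_prod_range (fun k => 1 - C (_ * _ ^ k) * X)]
  simp only [hpow]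
  linear_combination (∏ i : Fin ν.bnd, (1 - C (t ^ (2 * (-(i : ℤ) - 1) + 1)) * X)) *
    mk (hGeom (t ^ (-1 : ℤ)) (t ^ (-2 : ℤ))) * hlist

theorem mk_hNeg_one_mul_prod (κ : Ptn) :
    mk (hNeg t 1 κ) * ∏ j : Fin κ.bnd, (1 - C (t ^ (2 * ((j : ℤ) - κ.parts j) + 1)) * X) =
      (∏ j : Fin κ.bnd, (1 - C (t ^ (2 * (j : ℤ) + 1)) * X)) * mk (hGeom t (t ^ (2 : ℤ))) := by
  have hpow (k : ℕ) : t * (t ^ (2 : ℤ)) ^ k = t ^ (2 * (k : ℤ) + 1) := by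
    rw [← zpow_natCast, ← zpow_mul, zpow_add_one₀ ht0, mul_comm]
  have hsplit : mk (hNeg t 1 κ) =
      mk (hList (List.ofFn fun j : Fin κ.bnd => t ^ (2 * ((j : ℤ) - κ.parts j) + 1))) *
        mk (hGeom (t * (t ^ (2 : ℤ)) ^ κ.bnd) (t ^ (2 : ℤ))) := by
    ext n
    have hexp (a b : ℤ) : -(2 * a) + 2 * b + 1 = 2 * (b - a) + 1 := by ring
    rw [coeff_mk_mul_mk, hpow]
    simp only [hNeg, coeff_mk, hexp, one_mul]
  have hlist := mk_hList_ofFn_mul_prod fun j : Fin κ.bnd => t ^ (2 * ((j : ℤ) - κ.parts j) + 1)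
  rw [hsplit, mk_hGeom_mul_pow (not_isOfFinOrder_zpow_two ht),
    ← Fin.prod_univ_eq_prod_range (fun k => 1 - C (_ * _ ^ k) * X)]
  simp only [hpow]
  linear_combination (∏ j : Fin κ.bnd, (1 - C (t ^ (2 * (j : ℤ) + 1)) * X)) *
    mk (hGeom t (t ^ (2 : ℤ))) * hlist

theorem mk_hGeom_zpow_neg_one_mul_mk_hGeom :
    mk (hGeom (t ^ (-1 : ℤ)) (t ^ (-2 : ℤ))) * mk (hGeom t (t ^ (2 : ℤ))) = 1 := by
  have h := mk_hGeom_mul_inv_mul_mk_hGeom (zpow_ne_zero 2 ht0) (not_isOfFinOrder_zpow_two ht) t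
  rwa [← zpow_neg, ← zpow_one_add₀ ht0] at h

end Specialization

theorem mk_hPos_mul_mk_hNeg_pconj {t : F} (ht0 : t ≠ 0) (ht : ¬IsOfFinOrder t) (ν : Ptn) :
    mk (hPos t 1 ν) * mk (hNeg t 1 (pconj ν)) = 1 := by
  set f : ℤ → F⟦X⟧ := fun u => 1 - C (t ^ (2 * u + 1)) * X
  have hmaya : (∏ i : Fin ν.bnd, f (ν.parts i - i - 1)) *
      ∏ j : Fin (ν.parts 0), f (j - (pconj ν).parts j) =
      (∏ i : Fin ν.bnd, f (-i - 1)) * ∏ j : Fin (ν.parts 0), f j := by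
    rw [prod_mayaIndex le_rfl le_rfl, ← prod_mayaIndex (μ := zeroP) (Nat.zero_le _) (Nat.zero_le _)]
    simp [zeroP, pconj]
  have hne : (∏ i : Fin ν.bnd, f (-i - 1)) * ∏ j : Fin (ν.parts 0), f j ≠ 0 :=
    mul_ne_zero (prod_ne_zero_iff.mpr fun _ _ => one_sub_C_mul_X_ne_zero _)
      (prod_ne_zero_iff.mpr fun _ _ => one_sub_C_mul_X_ne_zero _)
  rw [← hmaya] at hne
  refine mul_right_cancel₀ hne ?_
  calc mk (hPos t 1 ν) * mk (hNeg t 1 (pconj ν)) * ((∏ i : Fin ν.bnd, f (ν.parts i - i - 1)) *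
        ∏ j : Fin (ν.parts 0), f (j - (pconj ν).parts j))
      = (mk (hPos t 1 ν) * ∏ i : Fin ν.bnd, f (ν.parts i - i - 1)) *
          (mk (hNeg t 1 (pconj ν)) * ∏ j : Fin (pconj ν).bnd, f (j - (pconj ν).parts j)) :=
        mul_mul_mul_comm _ _ _ _
    _ = ((∏ i : Fin ν.bnd, f (-i - 1)) * ∏ j : Fin (ν.parts 0), f j) *
          (mk (hGeom (t ^ (-1 : ℤ)) (t ^ (-2 : ℤ))) * mk (hGeom t (t ^ (2 : ℤ)))) := by
        rw [mk_hPos_one_mul_prod ht0 ht, mk_hNeg_one_mul_prod ht0 ht]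
        exact mul_mul_mul_comm _ _ _ _
    _ = 1 * ((∏ i : Fin ν.bnd, f (ν.parts i - i - 1)) *
          ∏ j : Fin (ν.parts 0), f (j - (pconj ν).parts j)) := by
        rw [mk_hGeom_zpow_neg_one_mul_mk_hGeom ht0 ht, hmaya, mul_one, one_mul]

end SkewSchur

/-- For partitions `λ, μ, ν`:
`s_{λ/μ}(q^{ν+ρ}) = (-1)^{|λ|-|μ|} s_{λ^t/μ^t}(q^{-ν^t-ρ})`,
an identity of rational functions in `t = q^{1/2}`. -/
theorem skew_schur_specialization_symmetry (lam mu ν : Ptn) :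
    sP (RatFunc.X : RatFunc ℚ) lam mu ν =
      (-1 : RatFunc ℚ) ^ ((psize lam : ℤ) - (psize mu : ℤ)) *
        sN (RatFunc.X : RatFunc ℚ) (pconj lam) (pconj mu) (pconj ν) :=
  SkewSchur.sJT_eq_neg_one_zpow_mul_sJT_pconj (SkewSchur.hPos_zero _ _ _)
    (SkewSchur.mk_hPos_mul_mk_hNeg_pconj RatFunc.X_ne_zero RatFunc.not_isOfFinOrder_X ν) lam mu
end
end

section
/- All coefficients C_k(μ,ν) of the Laurent polynomial f_{μ,ν}(q) are nonnegative integers. -/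
open scoped LaurentSeries
noncomputable section

/-!
Write `β_i = μ_i - i` for the beta numbers of `μ` and encode `μ` by its Maya diagram: the
particles `P_μ = {β_i ≥ 0}` and the holes `N_μ = {h < 0 | h ≠ β_i for all i}`, two sets of the
same size. Then `(1 - q⁻¹) f_μ = Σ_{p ∈ P_μ} q^p - Σ_{h ∈ N_μ} q^h`, and the pairing of
particles with holes gives `f_μ = Σ_{p ∈ P_μ} (q + ⋯ + q^p) + Σ_{h ∈ N_μ} (q^{h+1} + ⋯ + 1)`.
Since `q - 2 + q⁻¹ = q (1 - q⁻¹)²`, the coefficient `C_k` counts the pairs summing to `k - 1`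
in `P_μ × P_ν` and in `N_μ × N_ν`, minus those in `P_μ × N_ν` and in `P_ν × N_μ`, plus the
coefficients of `q^k` in `f_μ` and `f_ν`. A pair `(p, h) ∈ P_μ × N_ν` with `p + h = k - 1` is
determined by `p ≥ k` when `k > 0` and by `h < k` when `k ≤ 0`, so the subtracted pairs are
dominated by the last two terms.
-/

open Finset

def addRepCount (A B : Finset ℤ) (n : ℤ) : ℕ := #{x ∈ A ×ˢ B | x.1 + x.2 = n}

theorem addRepCount_le {A B : Finset ℤ} (hA : ∀ s ∈ A, 0 ≤ s) (hB : ∀ t ∈ B, t < 0) (k : ℤ) :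
    addRepCount A B (k - 1) ≤ #{s ∈ A | k ∈ Ioc 0 s} + #{t ∈ B | k ∈ Ioc t 0} := by
  rcases lt_or_ge 0 k with hk | hk
  · refine (card_le_card_of_injOn Prod.fst ?_ ?_).trans le_self_add
    · intro x hx
      simp only [coe_filter, mem_product, Set.mem_ofPred_eq, mem_Ioc] at hx ⊢
      have := hB _ hx.1.2
      exact ⟨hx.1.1, hk, by omega⟩
    · intro x hx y hy hxy
      simp only [coe_filter, Set.mem_ofPred_eq] at hx hy
      exact Prod.ext hxy (by omega)
  · refine (card_le_card_of_injOn Prod.snd ?_ ?_).trans le_add_self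
    · intro x hx
      simp only [coe_filter, mem_product, Set.mem_ofPred_eq, mem_Ioc] at hx ⊢
      have := hA _ hx.1.1
      exact ⟨hx.1.2, by omega, hk⟩
    · intro x hx y hy hxy
      simp only [coe_filter, Set.mem_ofPred_eq] at hx hy
      exact Prod.ext (by omega) hxy

namespace RatFunc

variable {F : Type*} [Field F]

theorem X_ne_one_s13 : (X : RatFunc F) ≠ 1 := by
  intro h
  simpa using congrArg (fun f : RatFunc F => (f : F⸨X⸩).coeff 1) h

theorem coeff_coe_X_zpow (z k : ℤ) :
    ((X ^ z : RatFunc F) : F⸨X⸩).coeff k = if z = k then 1 else 0 := by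
  rw [map_zpow₀, coe_X, ← single_zpow]
  split_ifs with h
  · rw [h, HahnSeries.coeff_single_same]
  · exact HahnSeries.coeff_single_of_ne (Ne.symm h)

theorem coeff_coe_sum_X_zpow (A : Finset ℤ) (k : ℤ) :
    ((∑ s ∈ A, X ^ s : RatFunc F) : F⸨X⸩).coeff k = if k ∈ A then 1 else 0 := by
  simp_rw [map_sum, HahnSeries.coeff_sum, coeff_coe_X_zpow, sum_ite_eq']

theorem coeff_coe_X_mul (f : RatFunc F) (k : ℤ) :
    ((X * f : RatFunc F) : F⸨X⸩).coeff k = (f : F⸨X⸩).coeff (k - 1) := by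
  rw [map_mul, coe_X, HahnSeries.coeff_single_mul, one_mul]

theorem coeff_coe_sum_X_zpow_mul_sum_X_zpow (A B : Finset ℤ) (n : ℤ) :
    (((∑ s ∈ A, X ^ s) * ∑ t ∈ B, X ^ t : RatFunc F) : F⸨X⸩).coeff n
      = addRepCount A B n := by
  simp_rw [sum_mul_sum, ← zpow_add₀ (X_ne_zero (K := F))]
  rw [← sum_product' A B (fun s t => (X : RatFunc F) ^ (s + t))]
  simp_rw [map_sum, HahnSeries.coeff_sum, coeff_coe_X_zpow, sum_boole, addRepCount]

end RatFunc

theorem div_sub_one_mul_zpow_sub_zpow {K : Type*} [Field K] {x : K} (hx₀ : x ≠ 0) (hx₁ : x ≠ 1)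
    {a b : ℤ} (hab : a ≤ b) : x / (x - 1) * (x ^ b - x ^ a) = ∑ j ∈ Ioc a b, x ^ j := by
  induction b, hab using Int.leInduction with
  | base => simp
  | succ b hab ih =>
    have : x - 1 ≠ 0 := sub_ne_zero.2 hx₁
    rw [← insert_Ioc_right_eq_Ioc_add_one hab, sum_insert (by simp), ← ih, zpow_add_one₀ hx₀]
    field_simp
    ring

theorem sub_two_add_inv_mul_div_sub_one_mul {K : Type*} [Field K] {x : K} (hx₀ : x ≠ 0)
    (hx₁ : x ≠ 1) (a b : K) :
    (x - 2 + x⁻¹) * (x / (x - 1) * a) * (x / (x - 1) * b) = x * a * b := by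
  have : x - 1 ≠ 0 := sub_ne_zero.2 hx₁
  field_simp
  ring

theorem image_range_neg_succ (n : ℕ) :
    (range n).image (fun i : ℕ => -((i : ℤ) + 1)) = Icc (-n : ℤ) (-1) := by
  ext s
  simp only [mem_image, mem_range, mem_Icc]
  constructor
  · rintro ⟨i, hi, rfl⟩
    omega
  · exact fun hs => ⟨(-s - 1).toNat, by omega, by omega⟩

namespace Ptn

variable (μ : Ptn)

def beta (i : ℕ) : ℤ := μ.parts i - (i + 1)

theorem beta_strictAnti : StrictAnti μ.beta := fun i j hij => by
  have := μ.anti hij.le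
  unfold beta
  omega

theorem neg_succ_le_beta (i : ℕ) : -((i : ℤ) + 1) ≤ μ.beta i := by
  unfold beta
  omega

def particles : Finset ℤ := {s ∈ (range μ.bnd).image μ.beta | 0 ≤ s}

def holes : Finset ℤ := Icc (-μ.bnd : ℤ) (-1) \ (range μ.bnd).image μ.beta

variable {μ}

theorem nonneg_of_mem_particles : ∀ s ∈ μ.particles, 0 ≤ s :=
  fun _ hs => (mem_filter.1 hs).2

theorem neg_of_mem_holes : ∀ s ∈ μ.holes, s < 0 := fun s hs => by
  have := (mem_Icc.1 (mem_sdiff.1 hs).1).2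
  omega

variable (μ)

theorem sum_beta_sub_sum {M : Type*} [AddCommGroup M] (f : ℤ → M) :
    ∑ i ∈ range μ.bnd, (f (μ.beta i) - f (-((i : ℤ) + 1)))
      = ∑ s ∈ μ.particles, f s - ∑ s ∈ μ.holes, f s := by
  set B := (range μ.bnd).image μ.beta
  have hneg : Icc (-μ.bnd : ℤ) (-1) ∩ B = {s ∈ B | ¬0 ≤ s} := by
    ext s
    simp only [B, mem_inter, mem_Icc, mem_filter, mem_image, mem_range]
    constructor
    · rintro ⟨hs, hsB⟩
      exact ⟨hsB, by omega⟩
    · rintro ⟨⟨i, hi, rfl⟩, hs⟩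
      have := μ.neg_succ_le_beta i
      exact ⟨⟨by omega, by omega⟩, i, hi, rfl⟩
  rw [sum_sub_distrib, ← sum_image (g := μ.beta) (fun i _ j _ h => μ.beta_strictAnti.injective h),
    ← sum_image (g := fun i : ℕ => -((i : ℤ) + 1)) (fun i _ j _ h => by simpa using h),
    image_range_neg_succ, ← sum_inter_add_sum_sdiff (Icc _ _) B, hneg,
    ← sum_filter_add_sum_filter_not B (fun s => 0 ≤ s)]
  simp only [particles, holes, B]
  abel

theorem card_particles_eq_card_holes : #μ.particles = #μ.holes := by
  have := μ.sum_beta_sub_sum (fun _ => (1 : ℤ))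
  simp only [sub_self, sum_const_zero, sum_const, nsmul_eq_mul, mul_one] at this
  omega

open RatFunc

theorem fOne_eq : fOne μ = X / (X - 1) * (∑ s ∈ μ.particles, X ^ s - ∑ s ∈ μ.holes, X ^ s) :=
  congrArg _ (μ.sum_beta_sub_sum _)

theorem fOne_eq_sum_sum_Ioc : fOne μ
    = ∑ p ∈ μ.particles, ∑ j ∈ Ioc 0 p, X ^ j + ∑ h ∈ μ.holes, ∑ j ∈ Ioc h 0, X ^ j := by
  have hpair : ∑ s ∈ μ.particles, (X : RatFunc ℚ) ^ s - ∑ s ∈ μ.holes, X ^ s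
      = ∑ p ∈ μ.particles, (X ^ p - X ^ (0 : ℤ)) + ∑ h ∈ μ.holes, (X ^ (0 : ℤ) - X ^ h) := by
    rw [sum_sub_distrib, sum_sub_distrib, sum_const, sum_const, card_particles_eq_card_holes]
    abel
  rw [fOne_eq, hpair, mul_add, mul_sum, mul_sum]
  congr 1 <;> refine sum_congr rfl fun s hs => div_sub_one_mul_zpow_sub_zpow X_ne_zero X_ne_one_s13 ?_
  · exact nonneg_of_mem_particles s hs
  · exact (neg_of_mem_holes s hs).le

def contentMult (k : ℤ) : ℕ := #{p ∈ μ.particles | k ∈ Ioc 0 p} + #{h ∈ μ.holes | k ∈ Ioc h 0}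

theorem coeff_fOne (k : ℤ) : (fOne μ : ℚ⸨X⸩).coeff k = μ.contentMult k := by
  rw [fOne_eq_sum_sum_Ioc, map_add, HahnSeries.coeff_add, map_sum, map_sum,
    HahnSeries.coeff_sum, HahnSeries.coeff_sum]
  simp_rw [coeff_coe_sum_X_zpow, sum_boole, contentMult, Nat.cast_add]

end Ptn

open RatFunc Ptn in
theorem Ck_eq (μ ν : Ptn) (k : ℤ) :
    Ck μ ν k = (addRepCount μ.particles ν.particles (k - 1) : ℚ)
      + addRepCount μ.holes ν.holes (k - 1)
      - (addRepCount μ.particles ν.holes (k - 1) + addRepCount ν.particles μ.holes (k - 1))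
      + ((μ.contentMult k + ν.contentMult k : ℕ) : ℚ) := by
  have hexpand : ∀ a b c d : RatFunc ℚ, (a - b) * (c - d) = a * c + b * d - (a * d + c * b) := by
    intros; ring
  rw [Ck, fTwo, fOne_eq μ, fOne_eq ν, sub_two_add_inv_mul_div_sub_one_mul X_ne_zero X_ne_one_s13,
    ← fOne_eq, ← fOne_eq, mul_assoc, hexpand]
  simp only [map_add, map_sub, HahnSeries.coeff_add, HahnSeries.coeff_sub, coeff_coe_X_mul,
    coeff_coe_sum_X_zpow_mul_sum_X_zpow, coeff_fOne]
  push_cast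
  ring

/-- All the coefficients `C_k(μ,ν)` of the Laurent polynomial `f_{μ,ν}(q)`
are nonnegative integers. -/
theorem Ck_nonneg_integer (μ ν : Ptn) (k : ℤ) : ∃ n : ℕ, Ck μ ν k = (n : ℚ) := by
  have hμν := addRepCount_le μ.nonneg_of_mem_particles ν.neg_of_mem_holes k
  have hνμ := addRepCount_le ν.nonneg_of_mem_particles μ.neg_of_mem_holes k
  obtain ⟨m, hm⟩ : ∃ m, μ.contentMult k + ν.contentMult k
      = addRepCount μ.particles ν.holes (k - 1) + addRepCount ν.particles μ.holes (k - 1) + m :=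
    Nat.exists_eq_add_of_le (by unfold Ptn.contentMult; omega)
  refine ⟨addRepCount μ.particles ν.particles (k - 1) + addRepCount μ.holes ν.holes (k - 1) + m, ?_⟩
  rw [Ck_eq, hm]
  push_cast
  ring
end
end
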